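/- For every integer ℓ ≥ 1 there exist constants C > 0 and C' > 0 such that the following holds. Let γ ≥ 1 be an integer, let G be a weakly γ-closed finite simple graph, let D ⊆ V(G) be an ℓ-component set with k := |V(G)| − |D| ≥ 2, and let t ≥ 1 be an integer. If for every connected component Z of G[D] there are at most t other connected components Z' of G[D] such that the vertex sets of Z and Z' are |V(Z)|-twins in G, then |D| ≤ C · t · k^{C'·γ}. -/

import Mathlib

open Set

/-- `σ` is a closure ordering witnessing that `G` is weakly `γ`-closed: `σ` is an
injective labelling of the vertices, and for every vertex `v` and every later vertex `w`
distinct from and nonadjacent to `v`, the vertices `v` and `w` have fewer than `γ` common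
neighbors in the subgraph induced by the vertices from `v` onwards. -/
def IsClosureOrdering {V : Type*} (G : SimpleGraph V) (gam : ℕ) (σ : V → ℕ) : Prop :=
  Function.Injective σ ∧
    ∀ v w : V, σ v ≤ σ w → w ≠ v → ¬ G.Adj v w →
      {u : V | G.Adj v u ∧ G.Adj w u ∧ σ v ≤ σ u}.ncard < gam

/-- A graph is weakly `γ`-closed if it admits a closure ordering. -/
def WeaklyClosed {V : Type*} (G : SimpleGraph V) (gam : ℕ) : Prop :=
  ∃ σ : V → ℕ, IsClosureOrdering G gam σ

/-- `Q(v)`: the neighbors of `v` occurring after `v` in the ordering `σ`. -/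
def Qset {V : Type*} (G : SimpleGraph V) (σ : V → ℕ) (v : V) : Set V :=
  {u : V | G.Adj v u ∧ σ v < σ u}

/-- `P(v)`: the neighbors of `v` occurring before `v` in the ordering `σ`. -/
def Pset {V : Type*} (G : SimpleGraph V) (σ : V → ℕ) (v : V) : Set V :=
  {u : V | G.Adj v u ∧ σ u < σ v}

/-- A set of pairwise nonadjacent vertices. -/
def IsIndepSet {V : Type*} (G : SimpleGraph V) (s : Set V) : Prop :=
  s.Pairwise (fun u v => ¬ G.Adj u v)

/-- `Z` is the vertex set of a connected component of the subgraph of `G` induced by `D`: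
a maximal subset of `D` inducing a connected subgraph. -/
def IsComponentOf {V : Type*} (G : SimpleGraph V) (D Z : Set V) : Prop :=
  Z ⊆ D ∧ Z.Nonempty ∧ (G.induce Z).Connected ∧
    ∀ Z' : Set V, Z ⊆ Z' → Z' ⊆ D → (G.induce Z').Connected → Z' = Z

/-- Two disjoint vertex sets `A` and `B` of size `r` are `r`-twins if there are
orderings `a₁, …, a_r` of `A` and `b₁, …, b_r` of `B` with
`N(aᵢ) \ A = N(bᵢ) \ B` for all `i`. -/
def AreTwins {V : Type*} (G : SimpleGraph V) (r : ℕ) (A B : Set V) : Prop :=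
  Disjoint A B ∧
    ∃ a b : Fin r → V, Function.Injective a ∧ Function.Injective b ∧
      Set.range a = A ∧ Set.range b = B ∧
      ∀ i : Fin r, G.neighborSet (a i) \ A = G.neighborSet (b i) \ B


open Finset

variable {V : Type*} [DecidableEq V]

/-- The number of subsets of `S` of size at most `g` is at most `(|S|+1)^g`. -/
lemma count_small_subsets (S : Finset V) :
    ∀ g : ℕ, ((S.powerset).filter (fun A => A.card ≤ g)).card ≤ (S.card + 1) ^ g := by
  intro g
  induction g with
  | zero =>
    simp only [pow_zero]
    apply Finset.card_le_one.mpr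
    intro a ha b hb
    simp only [mem_filter, Nat.le_zero, Finset.card_eq_zero] at ha hb
    rw [ha.2, hb.2]
  | succ g ih =>
    classical
    have hmain : ((S.powerset).filter (fun A => A.card ≤ g + 1)).card ≤
        (((S.powerset).filter (fun A => A.card ≤ g)) ×ˢ (insertNone S)).card := by
      apply Finset.card_le_card_of_injOn
        (fun A => if h : A.Nonempty ∧ A.card = g + 1 then
          (A.erase h.1.choose, some h.1.choose) else (A, none))
      · intro A hA
        simp only [mem_coe, mem_filter, Finset.mem_powerset] at hA
        by_cases h : A.Nonempty ∧ A.card = g + 1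
        · simp only [mem_coe, dif_pos h, Finset.mem_product, mem_filter, Finset.mem_powerset]
          have hxA : h.1.choose ∈ A := h.1.choose_spec
          refine ⟨⟨(Finset.erase_subset _ _).trans hA.1, ?_⟩, ?_⟩
          · rw [Finset.card_erase_of_mem hxA, h.2]; simp
          · simp only [Finset.mem_insertNone]
            simp [hA.1 hxA]
        · simp only [mem_coe, dif_neg h, Finset.mem_product, mem_filter, Finset.mem_powerset]
          refine ⟨⟨hA.1, ?_⟩, by simp [Finset.mem_insertNone]⟩
          rcases Nat.lt_or_ge A.card (g + 1) with h1 | h1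
          · omega
          · exfalso; apply h
            have : A.card = g + 1 := le_antisymm hA.2 h1
            exact ⟨Finset.card_pos.mp (by omega), this⟩
      · intro A hA B hB hfeq
        by_cases hA1 : A.Nonempty ∧ A.card = g + 1 <;>
          by_cases hB1 : B.Nonempty ∧ B.card = g + 1
        · simp only [dif_pos hA1, dif_pos hB1, Prod.mk.injEq, Option.some.injEq] at hfeq
          have hxA : hA1.1.choose ∈ A := hA1.1.choose_spec
          have hxB : hB1.1.choose ∈ B := hB1.1.choose_spec
          rw [← Finset.insert_erase hxA, hfeq.1, hfeq.2, Finset.insert_erase hxB]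
        · simp only [dif_pos hA1, dif_neg hB1, Prod.mk.injEq] at hfeq
          exact absurd hfeq.2 (by simp)
        · simp only [dif_neg hA1, dif_pos hB1, Prod.mk.injEq] at hfeq
          exact absurd hfeq.2 (by simp)
        · simp only [dif_neg hA1, dif_neg hB1, Prod.mk.injEq] at hfeq
          exact hfeq.1
    calc ((S.powerset).filter (fun A => A.card ≤ g + 1)).card
        ≤ _ := hmain
      _ = ((S.powerset).filter (fun A => A.card ≤ g)).card * (S.card + 1) := by
          rw [Finset.card_product, Finset.card_insertNone]
      _ ≤ (S.card + 1) ^ g * (S.card + 1) := Nat.mul_le_mul_right _ ih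
      _ = (S.card + 1) ^ (g + 1) := by ring

/-- A family of distinct subsets of `S` pairwise intersecting in fewer than `g` elements
has size at most `2(|S|+1)^g`. -/
lemma count_pairwise_small_inter (S : Finset V) (g : ℕ) (F : Finset (Finset V))
    (hsub : ∀ A ∈ F, A ⊆ S)
    (hpw : ∀ A ∈ F, ∀ B ∈ F, A ≠ B → (A ∩ B).card < g) :
    F.card ≤ 2 * (S.card + 1) ^ g := by
  classical
  have hsplit := Finset.card_filter_add_card_filter_not (s := F)
    (p := fun A => g ≤ A.card)
  have hbig : (F.filter (fun A => g ≤ A.card)).card ≤ (S.card + 1) ^ g := by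
    have hch : ∀ A ∈ F.filter (fun A => g ≤ A.card), ∃ B ⊆ A, B.card = g := by
      intro A hA
      simp only [mem_filter] at hA
      exact Finset.exists_subset_card_eq hA.2
    refine le_trans (Finset.card_le_card_of_injOn
      (fun A => if h : ∃ B ⊆ A, B.card = g then h.choose else A) ?_ ?_)
      (count_small_subsets S g)
    · intro A hA
      have h := hch A hA
      simp only [mem_coe, dif_pos h, mem_filter, Finset.mem_powerset]
      obtain ⟨hsub', hcard⟩ := h.choose_spec
      simp only [mem_coe, mem_filter] at hA
      exact ⟨hsub'.trans (hsub A hA.1), le_of_eq hcard⟩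
    · intro A hA B hB hfeq
      have hA' := hch A hA
      have hB' := hch B hB
      simp only [dif_pos hA', dif_pos hB'] at hfeq
      by_contra hne
      simp only [mem_coe, mem_filter] at hA hB
      have hlt := hpw A hA.1 B hB.1 hne
      obtain ⟨hsA, hcA⟩ := hA'.choose_spec
      obtain ⟨hsB, hcB⟩ := hB'.choose_spec
      have hss : hA'.choose ⊆ A ∩ B := by
        intro x hx
        exact Finset.mem_inter.mpr ⟨hsA hx, hsB (hfeq ▸ hx)⟩
      have := Finset.card_le_card hss
      omega
  have hsmall : (F.filter (fun A => ¬ g ≤ A.card)).card ≤ (S.card + 1) ^ g := by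
    refine le_trans (Finset.card_le_card ?_) (count_small_subsets S g)
    intro A hA
    simp only [mem_filter, Finset.mem_powerset, not_le] at hA ⊢
    exact ⟨hsub A hA.1, by omega⟩
  omega

section core
variable {V : Type*} [Fintype V] [DecidableEq V] (G : SimpleGraph V) [DecidableRel G.Adj]

/-- trace of `v` on `S` : the neighbors of `v` inside `S`. -/
def trc (S : Finset V) (v : V) : Finset V := S.filter (fun u => G.Adj v u)

/-- the bound function for the main counting lemma -/
def bnd (gam : ℕ) : ℕ → ℕ
  | 0 => 1
  | (k+1) => bnd gam k + 3 * (k + 2) ^ gam + gam * (k + 1)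

variable {G}

lemma trc_sub {S : Finset V} {v : V} : trc G S v ⊆ S := Finset.filter_subset _ _

lemma mem_trc {S : Finset V} {v u : V} : u ∈ trc G S v ↔ u ∈ S ∧ G.Adj v u :=
  Finset.mem_filter

/-- Finset version of the closure bound. -/
lemma closure_card_lt {gam : ℕ} {σ : V → ℕ} (hσ : IsClosureOrdering G gam σ)
    {v w : V} (hle : σ v ≤ σ w) (hne : w ≠ v) (hnadj : ¬ G.Adj v w)
    (T : Finset V) (hT : ∀ u ∈ T, G.Adj v u ∧ G.Adj w u ∧ σ v ≤ σ u) :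
    T.card < gam := by
  have h := hσ.2 v w hle hne hnadj
  have hsub : (↑T : Set V) ⊆ {u : V | G.Adj v u ∧ G.Adj w u ∧ σ v ≤ σ u} := by
    intro u hu; exact hT u hu
  calc T.card = (↑T : Set V).ncard := (Set.ncard_coe_finset T).symm
    _ ≤ _ := Set.ncard_le_ncard hsub (Set.toFinite _)
    _ < gam := h

/-- Core counting lemma: an independent set, disjoint from `S`, whose members have
pairwise distinct traces on `S`, has at most `bnd gam |S|` elements. -/
lemma lemA {gam : ℕ} {σ : V → ℕ} (hσ : IsClosureOrdering G gam σ) :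
    ∀ (n : ℕ) (S I : Finset V), S.card = n →
    (∀ v ∈ I, v ∉ S) →
    (∀ v ∈ I, ∀ w ∈ I, v ≠ w → ¬ G.Adj v w) →
    (Set.InjOn (trc G S) ↑I) →
    I.card ≤ bnd gam n := by
  intro n
  induction n with
  | zero =>
    intro S I hScard hdisj hind hinj
    rw [Finset.card_eq_zero] at hScard
    subst hScard
    have : ∀ a ∈ I, ∀ b ∈ I, a = b := by
      intro a ha b hb
      apply hinj ha hb
      simp [trc]
    simpa [bnd] using Finset.card_le_one.mpr this
  | succ n ih =>
    intro S I hScard hdisj hind hinj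
    have hSne : S.Nonempty := Finset.card_pos.mp (by omega)
    obtain ⟨s, hsS, hsmin⟩ := Finset.exists_min_image S σ hSne
    -- basic facts
    have hIs : ∀ v ∈ I, σ s < σ v ∨ σ v < σ s := by
      intro v hv
      have : σ v ≠ σ s := fun h => hdisj v hv (hσ.1 h ▸ hsS)
      omega
    set I₀ := I.filter (fun v => σ v < σ s) with hI₀
    set I₁ := I.filter (fun v => σ s < σ v) with hI₁
    have hIsplit : I₀.card + I₁.card = I.card := by
      have h1 : I₁ = I.filter (fun v => ¬ σ v < σ s) := by
        apply Finset.filter_congr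
        intro v hv
        rcases hIs v hv with h | h
        · exact ⟨fun _ => by omega, fun _ => h⟩
        · exact ⟨fun h' => by omega, fun h' => by omega⟩
      rw [hI₀, h1]
      exact Finset.card_filter_add_card_filter_not (s := I) _
    -- Part I₀: all traces lie after s, pairwise intersections small
    have hI₀card : I₀.card ≤ 2 * (S.card + 1) ^ gam := by
      have hinj₀ : Set.InjOn (trc G S) ↑I₀ := by
        intro a ha b hb h
        exact hinj (Finset.mem_coe.mpr (Finset.mem_of_mem_filter a (Finset.mem_coe.mp ha)))
          (Finset.mem_coe.mpr (Finset.mem_of_mem_filter b (Finset.mem_coe.mp hb))) h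
      have := Finset.card_image_of_injOn hinj₀
      rw [← this]
      apply count_pairwise_small_inter S gam
      · intro A hA
        obtain ⟨v, hv, rfl⟩ := Finset.mem_image.mp hA
        exact trc_sub
      · intro A hA B hB hAB
        obtain ⟨v, hv, rfl⟩ := Finset.mem_image.mp hA
        obtain ⟨w, hw, rfl⟩ := Finset.mem_image.mp hB
        simp only [hI₀, Finset.mem_filter] at hv hw
        have hvw : v ≠ w := fun h => hAB (by rw [h])
        -- wlog σ v ≤ σ w
        rcases le_total (σ v) (σ w) with hle | hle
        · apply closure_card_lt hσ hle hvw.symm (hind v hv.1 w hw.1 hvw)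
          intro u hu
          simp only [Finset.mem_inter, mem_trc] at hu
          exact ⟨hu.1.2, hu.2.2, le_trans (le_of_lt hv.2) (hsmin u hu.1.1)⟩
        · rw [Finset.inter_comm]
          apply closure_card_lt hσ hle hvw (hind w hw.1 v hv.1 hvw.symm)
          intro u hu
          simp only [Finset.mem_inter, mem_trc] at hu
          exact ⟨hu.1.2, hu.2.2, le_trans (le_of_lt hw.2) (hsmin u hu.1.1)⟩
    -- Part I₁: split off the collision set B
    set B := I₁.filter (fun w => s ∈ trc G S w ∧
      ∃ v ∈ I₁, trc G S v = (trc G S w).erase s) with hB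
    have hBsub : B ⊆ I₁ := Finset.filter_subset _ _
    set I₁' := I₁ \ B with hI₁'
    have hI₁split : I₁'.card + B.card = I₁.card := by
      rw [hI₁']
      rw [Finset.card_sdiff_of_subset hBsub]
      have := Finset.card_le_card hBsub
      omega
    -- facts about I₁ members
    have hI₁mem : ∀ v ∈ I₁, v ∈ I ∧ σ s < σ v := by
      intro v hv
      simp only [hI₁, Finset.mem_filter] at hv
      exact hv
    -- recursion on I₁'
    have hrec : I₁'.card ≤ bnd gam n := by
      apply ih (S.erase s) I₁'
      · rw [Finset.card_erase_of_mem hsS, hScard]; rfl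
      · intro v hv
        have hv' := (hI₁mem v (Finset.mem_sdiff.mp hv).1).1
        intro hc
        exact hdisj v hv' (Finset.erase_subset _ _ hc)
      · intro v hv w hw
        exact hind v (hI₁mem v (Finset.mem_sdiff.mp hv).1).1
          w (hI₁mem w (Finset.mem_sdiff.mp hw).1).1
      · -- InjOn of traces on S.erase s
        have herase : ∀ v : V, trc G (S.erase s) v = (trc G S v).erase s := by
          intro v
          ext u
          simp only [mem_trc, Finset.mem_erase]
          tauto
        intro v hv w hw heq
        have hv : v ∈ I₁ ∧ v ∉ B := Finset.mem_sdiff.mp (Finset.mem_coe.mp hv)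
        have hw : w ∈ I₁ ∧ w ∉ B := Finset.mem_sdiff.mp (Finset.mem_coe.mp hw)
        rw [herase, herase] at heq
        by_contra hne
        have htrne : trc G S v ≠ trc G S w := by
          intro h
          exact hne (hinj (Finset.mem_coe.mpr (hI₁mem v hv.1).1)
            (Finset.mem_coe.mpr (hI₁mem w hw.1).1) h)
        -- traces differ only at s
        have hdiff : s ∈ trc G S v ∨ s ∈ trc G S w := by
          by_contra hc
          push_neg at hc
          apply htrne
          rw [← Finset.erase_eq_of_notMem hc.1, ← Finset.erase_eq_of_notMem hc.2, heq]
        -- whichever contains s is in B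
        rcases hdiff with hds | hds
        · -- v ∈ B
          apply hv.2
          rw [hB, Finset.mem_filter]
          refine ⟨hv.1, hds, w, hw.1, ?_⟩
          by_cases hsw : s ∈ trc G S w
          · exfalso; apply htrne
            rw [← Finset.insert_erase hds, ← Finset.insert_erase hsw, heq]
          · rw [heq]; exact (Finset.erase_eq_of_notMem hsw).symm
        · apply hw.2
          rw [hB, Finset.mem_filter]
          refine ⟨hw.1, hds, v, hv.1, ?_⟩
          by_cases hsv : s ∈ trc G S v
          · exfalso; apply htrne
            rw [← Finset.insert_erase hds, ← Finset.insert_erase hsv, heq]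
          · rw [← heq]; exact (Finset.erase_eq_of_notMem hsv).symm
    -- bound on B
    have hBcard : B.card ≤ (S.card + 1) ^ gam + gam * S.card := by
      -- τ is injective on B
      have hτinj : Set.InjOn (fun w => (trc G S w).erase s) ↑B := by
        intro a ha b hb h
        simp only [Finset.mem_coe, hB, Finset.mem_filter] at ha hb
        apply hinj (Finset.mem_coe.mpr (hI₁mem a ha.1).1) (Finset.mem_coe.mpr (hI₁mem b hb.1).1)
        rw [← Finset.insert_erase ha.2.1, ← Finset.insert_erase hb.2.1]
        simp only at h
        rw [h]
      -- facts for B members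
      have hBfact : ∀ w ∈ B, G.Adj w s ∧ σ s < σ w ∧
          ∃ v ∈ I₁, trc G S v = (trc G S w).erase s := by
        intro w hw
        simp only [hB, Finset.mem_filter] at hw
        exact ⟨(mem_trc.mp hw.2.1).2, (hI₁mem w hw.1).2, hw.2.2⟩
      set B₁ := B.filter (fun w => ∀ x ∈ (trc G S w).erase s, G.Adj s x) with hB₁
      set B₂ := B.filter (fun w => ¬ ∀ x ∈ (trc G S w).erase s, G.Adj s x) with hB₂
      have hBsplit : B₁.card + B₂.card = B.card :=
        Finset.card_filter_add_card_filter_not (s := B) _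
      have hB₁card : B₁.card ≤ (S.card + 1) ^ gam := by
        have hinj₁ : Set.InjOn (fun w => (trc G S w).erase s) ↑B₁ := by
          intro a ha b hb h
          exact hτinj (Finset.mem_coe.mpr (Finset.mem_of_mem_filter a (Finset.mem_coe.mp ha)))
            (Finset.mem_coe.mpr (Finset.mem_of_mem_filter b (Finset.mem_coe.mp hb))) h
        rw [← Finset.card_image_of_injOn hinj₁]
        refine le_trans (Finset.card_le_card ?_) (count_small_subsets S gam)
        intro A hA
        obtain ⟨w, hw, rfl⟩ := Finset.mem_image.mp hA
        simp only [Finset.mem_filter, Finset.mem_powerset]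
        have hwB : w ∈ B := Finset.mem_of_mem_filter w hw
        constructor
        · exact (Finset.erase_subset _ _).trans trc_sub
        · -- the erased trace is inside the closure set of (s, v)
          obtain ⟨hadj, hσw, v, hvI₁, hveq⟩ := hBfact w hwB
          have hvI : v ∈ I := (hI₁mem v hvI₁).1
          have hσv : σ s < σ v := (hI₁mem v hvI₁).2
          have hsv : s ≠ v := by
            intro h; exact hdisj v hvI (h ▸ hsS)
          have hnadj : ¬ G.Adj s v := by
            intro hadj'
            have : s ∈ trc G S v := mem_trc.mpr ⟨hsS, hadj'.symm⟩
            rw [hveq] at this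
            exact (Finset.notMem_erase s _) this
          have := closure_card_lt hσ (le_of_lt hσv) (Ne.symm hsv) hnadj
            ((trc G S w).erase s) ?_
          · omega
          · intro u hu
            have hu' : u ∈ trc G S v := hveq ▸ hu
            simp only [hB₁, Finset.mem_filter] at hw
            refine ⟨hw.2 u hu, (mem_trc.mp hu').2, hsmin u (mem_trc.mp hu').1⟩
      have hB₂card : B₂.card ≤ gam * S.card := by
        classical
        -- choose a non-neighbor of s in the erased trace
        set pick : V → V := fun w =>
          if h : ∃ x ∈ (trc G S w).erase s, ¬ G.Adj s x then h.choose else w with hpick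
        have hpickspec : ∀ w ∈ B₂, pick w ∈ (trc G S w).erase s ∧ ¬ G.Adj s (pick w) := by
          intro w hw
          simp only [hB₂, Finset.mem_filter] at hw
          have h : ∃ x ∈ (trc G S w).erase s, ¬ G.Adj s x := by
            push_neg at hw
            obtain ⟨x, hx1, hx2⟩ := hw.2
            exact ⟨x, hx1, hx2⟩
          simp only [hpick, dif_pos h]
          exact h.choose_spec
        have hmain := Finset.card_le_mul_card_image (s := B₂) (f := pick) gam ?_
        · refine le_trans hmain (Nat.mul_le_mul_left _ ?_)
          apply Finset.card_le_card
          intro x hx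
          obtain ⟨w, hw, rfl⟩ := Finset.mem_image.mp hx
          exact trc_sub (Finset.mem_of_mem_erase (hpickspec w hw).1)
        · -- each fiber has size < gam
          intro x hx
          obtain ⟨w₀, hw₀, rfl⟩ := Finset.mem_image.mp hx
          have hx' := hpickspec w₀ hw₀
          set x := pick w₀
          have hxS : x ∈ S := trc_sub (Finset.mem_of_mem_erase hx'.1)
          have hxs : x ≠ s := Finset.ne_of_mem_erase hx'.1
          have hle : σ s ≤ σ x := hsmin x hxS
          have hlt := closure_card_lt hσ hle hxs hx'.2 (B₂.filter (fun w => pick w = x)) ?_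
          · omega
          · intro w hw
            simp only [Finset.mem_filter] at hw
            have hwB : w ∈ B := Finset.mem_of_mem_filter w hw.1
            obtain ⟨hadj, hσw, _⟩ := hBfact w hwB
            have hxw : x ∈ trc G S w := by
              have := (hpickspec w hw.1).1
              rw [hw.2] at this
              exact Finset.mem_of_mem_erase this
            exact ⟨hadj.symm, ((mem_trc.mp hxw).2).symm, le_of_lt hσw⟩
      omega
    -- put it together
    rw [hScard] at hI₀card hBcard
    rw [show n + 1 + 1 = n + 2 by omega] at hI₀card hBcard
    have hb : bnd gam (n + 1) = bnd gam n + 3 * (n + 2) ^ gam + gam * (n + 1) := rfl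
    omega
end core

/-! ## Components -/


section comps
variable {V : Type*} (G : SimpleGraph V)

/-- one step inside `D` -/
def Stp (D : Set V) (a b : V) : Prop := a ∈ D ∧ b ∈ D ∧ G.Adj a b

/-- reachability inside `D` -/
def Rch (D : Set V) : V → V → Prop := Relation.ReflTransGen (Stp G D)

variable {G}

lemma Stp.symm' {D : Set V} {a b : V} (h : Stp G D a b) : Stp G D b a :=
  ⟨h.2.1, h.1, h.2.2.symm⟩

lemma Rch.symm' {D : Set V} {a b : V} (h : Rch G D a b) : Rch G D b a :=
  by
  induction h with
  | refl => exact Relation.ReflTransGen.refl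
  | tail _ h2 ih => exact Relation.ReflTransGen.head (Stp.symm' h2) ih

lemma Rch.mem_right {D : Set V} {a b : V} (ha : a ∈ D) (h : Rch G D a b) : b ∈ D := by
  induction h with
  | refl => exact ha
  | tail _ h2 _ => exact h2.2.1

lemma Rch.mono' {D D' : Set V} (hDD : D ⊆ D') {a b : V} (h : Rch G D a b) :
    Rch G D' a b :=
  Relation.ReflTransGen.mono (p := Stp G D') (fun _ _ hs => ⟨hDD hs.1, hDD hs.2.1, hs.2.2⟩) _ _ h

lemma connected_to_rch {Z : Set V} (h : (G.induce Z).Connected) :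
    ∀ a ∈ Z, ∀ b ∈ Z, Rch G Z a b := by
  intro a ha b hb
  have hreach := h.preconnected ⟨a, ha⟩ ⟨b, hb⟩
  obtain ⟨p⟩ := hreach
  -- induct on the walk
  suffices haux : ∀ (x y : Z) (_ : (G.induce Z).Walk x y), Rch G Z x y from haux _ _ p
  intro x y q
  induction q with
  | nil => exact Relation.ReflTransGen.refl
  | @cons u v w huv _ ih =>
    exact Relation.ReflTransGen.head ⟨u.2, v.2, huv⟩ ih

lemma rch_to_connected {Z : Set V} (hne : Z.Nonempty)
    (h : ∀ a ∈ Z, ∀ b ∈ Z, Rch G Z a b) : (G.induce Z).Connected := by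
  rw [SimpleGraph.connected_iff]
  refine ⟨?_, ?_⟩
  · intro x y
    have hxy := h x.1 x.2 y.1 y.2
    -- convert Rch to Reachable
    have haux : ∀ b (hb : Rch G Z x.1 b) (hbZ : b ∈ Z),
        (G.induce Z).Reachable x ⟨b, hbZ⟩ := by
      intro b hb
      induction hb with
      | refl => intro hbZ; rfl
      | @tail c d hcd hstep ih =>
        intro hdZ
        have hr := ih hstep.1
        have : (G.induce Z).Adj ⟨c, hstep.1⟩ ⟨d, hdZ⟩ := hstep.2.2
        exact hr.trans this.reachable
    have := haux y.1 hxy y.2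
    convert this
  · obtain ⟨a, ha⟩ := hne
    exact ⟨⟨a, ha⟩⟩

/-- The `D`-connected component of a vertex `v ∈ D`. -/
def compOf (G : SimpleGraph V) (D : Set V) (v : V) : Set V := {w | Rch G D v w}

lemma mem_compOf_self {D : Set V} (v : V) : v ∈ compOf G D v :=
  Relation.ReflTransGen.refl

lemma compOf_subset {D : Set V} {v : V} (hv : v ∈ D) : compOf G D v ⊆ D :=
  fun _ hw => Rch.mem_right hv hw

lemma compOf_isComponent {D : Set V} {v : V} (hv : v ∈ D) :
    IsComponentOf G D (compOf G D v) := by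
  refine ⟨compOf_subset hv, ⟨v, mem_compOf_self v⟩, ?_, ?_⟩
  · apply rch_to_connected ⟨v, mem_compOf_self v⟩
    -- strengthen: reachability in D from v implies reachability within compOf
    have hstr : ∀ b, Rch G D v b → Rch G (compOf G D v) v b := by
      intro b hb
      induction hb with
      | refl => exact Relation.ReflTransGen.refl
      | @tail c d hcd hstep ih =>
        refine Relation.ReflTransGen.tail ih ⟨hcd, ?_, hstep.2.2⟩
        exact Relation.ReflTransGen.tail hcd hstep
    intro a ha b hb
    exact (Rch.symm' (hstr a ha)).trans (hstr b hb)
  · intro Z' hZZ' hZ'D hconn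
    apply Set.Subset.antisymm _ hZZ'
    intro u hu
    have hvZ' : v ∈ Z' := hZZ' (mem_compOf_self v)
    have := connected_to_rch hconn v hvZ' u hu
    exact Rch.mono' hZ'D this

lemma component_eq_of_mem {D Z₁ Z₂ : Set V} (h₁ : IsComponentOf G D Z₁)
    (h₂ : IsComponentOf G D Z₂) {v : V} (hv₁ : v ∈ Z₁) (hv₂ : v ∈ Z₂) : Z₁ = Z₂ := by
  have hconn : (G.induce (Z₁ ∪ Z₂)).Connected := by
    apply rch_to_connected ⟨v, Or.inl hv₁⟩
    intro a ha b hb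
    have hto : ∀ c ∈ Z₁ ∪ Z₂, Rch G (Z₁ ∪ Z₂) v c := by
      intro c hc
      rcases hc with hc | hc
      · exact Rch.mono' Set.subset_union_left (connected_to_rch h₁.2.2.1 v hv₁ c hc)
      · exact Rch.mono' Set.subset_union_right (connected_to_rch h₂.2.2.1 v hv₂ c hc)
    exact (Rch.symm' (hto a ha)).trans (hto b hb)
  have e₁ := h₁.2.2.2 (Z₁ ∪ Z₂) Set.subset_union_left
    (Set.union_subset h₁.1 h₂.1) hconn
  have e₂ := h₂.2.2.2 (Z₁ ∪ Z₂) Set.subset_union_right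
    (Set.union_subset h₁.1 h₂.1) hconn
  exact e₁.symm.trans e₂

lemma component_eq_of_adj {D Z₁ Z₂ : Set V} (h₁ : IsComponentOf G D Z₁)
    (h₂ : IsComponentOf G D Z₂) {u w : V} (hu : u ∈ Z₁) (hw : w ∈ Z₂)
    (hadj : G.Adj u w) : Z₁ = Z₂ := by
  have hconn : (G.induce (Z₁ ∪ Z₂)).Connected := by
    apply rch_to_connected ⟨u, Or.inl hu⟩
    have huw : Rch G (Z₁ ∪ Z₂) u w :=
      Relation.ReflTransGen.single ⟨Or.inl hu, Or.inr hw, hadj⟩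
    have hto : ∀ c ∈ Z₁ ∪ Z₂, Rch G (Z₁ ∪ Z₂) u c := by
      intro c hc
      rcases hc with hc | hc
      · exact Rch.mono' Set.subset_union_left (connected_to_rch h₁.2.2.1 u hu c hc)
      · exact huw.trans
          (Rch.mono' Set.subset_union_right (connected_to_rch h₂.2.2.1 w hw c hc))
    intro a ha b hb
    exact (Rch.symm' (hto a ha)).trans (hto b hb)
  have e₁ := h₁.2.2.2 (Z₁ ∪ Z₂) Set.subset_union_left
    (Set.union_subset h₁.1 h₂.1) hconn
  have e₂ := h₂.2.2.2 (Z₁ ∪ Z₂) Set.subset_union_right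
    (Set.union_subset h₁.1 h₂.1) hconn
  exact e₁.symm.trans e₂

/-- neighbors in `D` of a vertex of a component lie in the component -/
lemma mem_component_of_adj {D Z : Set V} (hZ : IsComponentOf G D Z) {v u : V}
    (hv : v ∈ Z) (hu : u ∈ D) (hadj : G.Adj v u) : u ∈ Z := by
  have hZu := compOf_isComponent (G := G) hu
  have := component_eq_of_adj hZ hZu hv (mem_compOf_self u) hadj
  rw [this]
  exact mem_compOf_self u

lemma component_disjoint {D Z₁ Z₂ : Set V} (h₁ : IsComponentOf G D Z₁)
    (h₂ : IsComponentOf G D Z₂) (hne : Z₁ ≠ Z₂) : Disjoint Z₁ Z₂ := by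
  rw [Set.disjoint_left]
  intro v hv₁ hv₂
  exact hne (component_eq_of_mem h₁ h₂ hv₁ hv₂)

end comps


section assemble
variable {V : Type*} [Fintype V] [DecidableEq V] [LinearOrder V]
  (G : SimpleGraph V) [DecidableRel G.Adj]

/-- canonical sorted list of a set of vertices -/
noncomputable def sortedOf (Z : Set V) : List V := (Z.toFinite.toFinset).sort (· ≤ ·)

/-- the "type" of a set: the list of traces of its sorted elements -/
noncomputable def typof (S : Finset V) (Z : Set V) : List (Finset V) :=
  (sortedOf Z).map (trc G S)

variable {G}

lemma sortedOf_length {Z : Set V} : (sortedOf (V := V) Z).length = Z.ncard := by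
  rw [sortedOf, Finset.length_sort, Set.ncard_eq_toFinset_card]

lemma sortedOf_nodup {Z : Set V} : (sortedOf (V := V) Z).Nodup :=
  Finset.sort_nodup _ _

lemma mem_sortedOf {Z : Set V} {v : V} : v ∈ sortedOf (V := V) Z ↔ v ∈ Z := by
  rw [sortedOf, Finset.mem_sort, Set.Finite.mem_toFinset]

lemma typof_length {S : Finset V} {Z : Set V} :
    (typof G S Z).length = Z.ncard := by
  rw [typof, List.length_map, sortedOf_length]

/-- the difference of the neighborhood of a component vertex is its trace -/
lemma neigh_diff_eq {D Z : Set V} (hZ : IsComponentOf G D Z) {v : V} (hv : v ∈ Z)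
    (S : Finset V) (hS : ∀ u, u ∈ S ↔ u ∉ D) :
    G.neighborSet v \ Z = ↑(trc G S v) := by
  ext u
  simp only [Set.mem_diff, SimpleGraph.mem_neighborSet, Finset.coe_filter, trc,
    Set.mem_setOf_eq, hS]
  constructor
  · rintro ⟨hadj, hnZ⟩
    exact ⟨fun hD => hnZ (mem_component_of_adj hZ hv hD hadj), hadj⟩
  · rintro ⟨hnD, hadj⟩
    exact ⟨hadj, fun hZu => hnD (hZ.1 hZu)⟩

lemma twins_of_typof_eq {S : Finset V} {D Z Z' : Set V} (hS : ∀ u, u ∈ S ↔ u ∉ D)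
    (hZ : IsComponentOf G D Z) (hZ' : IsComponentOf G D Z') (hne : Z ≠ Z')
    (heq : typof G S Z = typof G S Z') : AreTwins G Z.ncard Z Z' := by
  have hlen : (sortedOf Z).length = Z.ncard := sortedOf_length
  have hcc : Z'.ncard = Z.ncard := by
    rw [← typof_length (G := G) (S := S), ← heq, typof_length]
  have hlen' : (sortedOf Z').length = Z.ncard := by rw [sortedOf_length, hcc]
  refine ⟨component_disjoint hZ hZ' hne, ?_⟩
  set a : Fin Z.ncard → V := fun i => (sortedOf Z).get (Fin.cast hlen.symm i) with ha
  set b : Fin Z.ncard → V := fun i => (sortedOf Z').get (Fin.cast hlen'.symm i) with hb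
  have hget : ∀ (i : ℕ) (h1 : i < (sortedOf Z).length) (h2 : i < (sortedOf Z').length),
      trc G S ((sortedOf Z).get ⟨i, h1⟩) = trc G S ((sortedOf Z').get ⟨i, h2⟩) := by
    intro i h1 h2
    have hmap := congrArg (fun L => L[i]?) heq
    simp only [typof, List.getElem?_map] at hmap
    rw [List.getElem?_eq_getElem h1, List.getElem?_eq_getElem h2] at hmap
    simpa using hmap
  have hmema : ∀ i, a i ∈ Z := by
    intro i
    exact mem_sortedOf.mp (List.get_mem _ _)
  have hmemb : ∀ i, b i ∈ Z' := by
    intro i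
    exact mem_sortedOf.mp (List.get_mem _ _)
  refine ⟨a, b, ?_, ?_, ?_, ?_, ?_⟩
  · intro i j hij
    have := (List.nodup_iff_injective_get.mp sortedOf_nodup) hij
    exact Fin.cast_injective _ this
  · intro i j hij
    have := (List.nodup_iff_injective_get.mp sortedOf_nodup) hij
    exact Fin.cast_injective _ this
  · ext x
    constructor
    · rintro ⟨i, rfl⟩; exact hmema i
    · intro hx
      have hx' : x ∈ sortedOf Z := mem_sortedOf.mpr hx
      obtain ⟨n, hn⟩ := List.mem_iff_get.mp hx'
      exact ⟨Fin.cast hlen n, by simp [ha]; simpa using hn⟩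
  · ext x
    constructor
    · rintro ⟨i, rfl⟩; exact hmemb i
    · intro hx
      have hx' : x ∈ sortedOf Z' := mem_sortedOf.mpr hx
      obtain ⟨n, hn⟩ := List.mem_iff_get.mp hx'
      exact ⟨Fin.cast hlen' n, by simp [hb]; simpa using hn⟩
  · intro i
    rw [neigh_diff_eq hZ (hmema i) S hS, neigh_diff_eq hZ' (hmemb i) S hS]
    exact congrArg (fun A : Finset V => (A : Set V)) (hget i.val
      (by rw [hlen]; exact i.isLt) (by rw [hlen']; exact i.isLt))
end assemble

lemma bnd_le {gam k : ℕ} (hg : 1 ≤ gam) (hk : 2 ≤ k) :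
    bnd gam k ≤ 5 * k ^ (3 * gam) := by
  have h1 : ∀ m : ℕ, bnd gam m ≤ 1 + m * (3 * (m + 1) ^ gam + gam * m) := by
    intro m
    induction m with
    | zero => simp [bnd]
    | succ m ih =>
      have hb : bnd gam (m + 1) = bnd gam m + 3 * (m + 2) ^ gam + gam * (m + 1) := rfl
      have hmono : (m + 1) ^ gam ≤ (m + 2) ^ gam := Nat.pow_le_pow_left (by omega) _
      have hgm : gam * m ≤ gam * (m + 1) := Nat.mul_le_mul_left _ (by omega)
      have key : m * (3 * (m + 1) ^ gam + gam * m) ≤ m * (3 * (m + 2) ^ gam + gam * (m + 1)) :=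
        Nat.mul_le_mul_left _ (by omega)
      calc bnd gam (m + 1) = bnd gam m + 3 * (m + 2) ^ gam + gam * (m + 1) := hb
        _ ≤ (1 + m * (3 * (m + 1) ^ gam + gam * m)) + 3 * (m + 2) ^ gam + gam * (m + 1) := by
            omega
        _ ≤ (1 + m * (3 * (m + 2) ^ gam + gam * (m + 1))) + 3 * (m + 2) ^ gam + gam * (m + 1) := by
            omega
        _ = 1 + (m + 1) * (3 * (m + 2) ^ gam + gam * (m + 1)) := by ring
  have h2 := h1 k
  have hkk : k + 1 ≤ k * k := by nlinarith
  have e1 : (k + 1) ^ gam ≤ k ^ (2 * gam) := by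
    calc (k + 1) ^ gam ≤ (k * k) ^ gam := Nat.pow_le_pow_left hkk _
      _ = k ^ (2 * gam) := by rw [pow_mul, sq]
  have e2 : gam ≤ k ^ gam :=
    le_trans (Nat.le_of_lt (Nat.lt_two_pow_self (n := gam))) (Nat.pow_le_pow_left hk _)
  have p1 : k ^ (2 * gam) * k ≤ k ^ (3 * gam) := by
    rw [← pow_succ]
    exact Nat.pow_le_pow_right (by omega) (by omega)
  have p2 : k ^ gam * k * k ≤ k ^ (3 * gam) := by
    rw [← pow_succ, ← pow_succ]
    exact Nat.pow_le_pow_right (by omega) (by omega)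
  have p0 : 1 ≤ k ^ (3 * gam) := Nat.one_le_pow _ _ (by omega)
  have step : k * (3 * (k + 1) ^ gam + gam * k) ≤ 3 * (k ^ (2 * gam) * k) + k ^ gam * k * k := by
    have i1 : 3 * (k + 1) ^ gam + gam * k ≤ 3 * k ^ (2 * gam) + k ^ gam * k :=
      Nat.add_le_add (Nat.mul_le_mul_left 3 e1) (Nat.mul_le_mul_right k e2)
    calc k * (3 * (k + 1) ^ gam + gam * k) ≤ k * (3 * k ^ (2 * gam) + k ^ gam * k) :=
          Nat.mul_le_mul_left _ i1
      _ = 3 * (k ^ (2 * gam) * k) + k ^ gam * k * k := by ring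
  calc bnd gam k ≤ 1 + k * (3 * (k + 1) ^ gam + gam * k) := h2
    _ ≤ 1 + (3 * (k ^ (2 * gam) * k) + k ^ gam * k * k) := by omega
    _ ≤ k ^ (3 * gam) + (3 * k ^ (3 * gam) + k ^ (3 * gam)) := by omega
    _ = 5 * k ^ (3 * gam) := by ring

section mainnat
variable {V : Type*} [Fintype V] [DecidableEq V] [LinearOrder V]
  {G : SimpleGraph V} [DecidableRel G.Adj]

lemma main_nat {gam l t : ℕ} (hg : 1 ≤ gam) (hl : 1 ≤ l) (ht : 1 ≤ t)
    {σ : V → ℕ} (hσ : IsClosureOrdering G gam σ) (D : Set V)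
    (hcl : ∀ Z : Set V, IsComponentOf G D Z → Z.ncard ≤ l)
    (k : ℕ) (hk : k = Fintype.card V - D.ncard) (hk2 : 2 ≤ k)
    (htw : ∀ Z : Set V, IsComponentOf G D Z →
      {Z' : Set V | IsComponentOf G D Z' ∧ Z' ≠ Z ∧ AreTwins G Z.ncard Z Z'}.ncard ≤ t) :
    D.ncard ≤ (2 * l * (6 * l) ^ l) * t * k ^ (3 * l * gam) := by
  classical
  -- the complement
  set Df : Finset V := (Set.toFinite D).toFinset with hDf
  have hDmem : ∀ u : V, u ∈ Df ↔ u ∈ D := fun u => Set.Finite.mem_toFinset _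
  set S : Finset V := Finset.univ \ Df with hSdef
  have hSmem : ∀ u : V, u ∈ S ↔ u ∉ D := by
    intro u
    rw [hSdef, Finset.mem_sdiff]
    simp [hDmem u]
  have hDcard : D.ncard = Df.card := Set.ncard_eq_toFinset_card D (Set.toFinite D)
  have hkcard : S.card = k := by
    rw [hSdef, Finset.card_sdiff_of_subset (Finset.subset_univ _), Finset.card_univ, hk, hDcard]
  -- the finset of components
  have hCfin : {Z : Set V | IsComponentOf G D Z}.Finite := Set.toFinite _
  set CF : Finset (Set V) := hCfin.toFinset with hCF
  have hCFmem : ∀ Z : Set V, Z ∈ CF ↔ IsComponentOf G D Z :=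
    fun Z => Set.Finite.mem_toFinset _
  -- every vertex of D lies in its component
  have hvcomp : ∀ v, v ∈ D → IsComponentOf G D (compOf G D v) :=
    fun v hv => compOf_isComponent hv
  -- |D| ≤ l * #CF
  have hDle : Df.card ≤ l * CF.card := by
    have hsub : Df ⊆ CF.biUnion (fun Z => (Set.toFinite Z).toFinset) := by
      intro v hv
      rw [Finset.mem_biUnion]
      refine ⟨compOf G D v, ?_, ?_⟩
      · rw [hCFmem]; exact hvcomp v ((hDmem v).mp hv)
      · rw [Set.Finite.mem_toFinset]; exact mem_compOf_self v
    calc Df.card ≤ (CF.biUnion (fun Z => (Set.toFinite Z).toFinset)).card :=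
          Finset.card_le_card hsub
      _ ≤ ∑ Z ∈ CF, ((Set.toFinite Z).toFinset).card := Finset.card_biUnion_le
      _ ≤ ∑ _Z ∈ CF, l := by
          apply Finset.sum_le_sum
          intro Z hZ
          rw [← Set.ncard_eq_toFinset_card]
          exact hcl Z ((hCFmem Z).mp hZ)
      _ = l * CF.card := by rw [Finset.sum_const, smul_eq_mul, mul_comm]
  -- pigeonhole on types
  have hpig : CF.card ≤ (t + 1) * (CF.image (typof G S)).card := by
    apply Finset.card_le_mul_card_image
    intro τ hτ
    obtain ⟨Z₀, hZ₀CF, hZ₀τ⟩ := Finset.mem_image.mp hτ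
    have hZ₀ : IsComponentOf G D Z₀ := (hCFmem Z₀).mp hZ₀CF
    have hZ₀fib : Z₀ ∈ CF.filter (fun Z => typof G S Z = τ) :=
      Finset.mem_filter.mpr ⟨hZ₀CF, hZ₀τ⟩
    have herase : ((CF.filter (fun Z => typof G S Z = τ)).erase Z₀).card ≤ t := by
      have hsub2 : (((CF.filter (fun Z => typof G S Z = τ)).erase Z₀ : Finset (Set V)) : Set (Set V))
          ⊆ {Z' : Set V | IsComponentOf G D Z' ∧ Z' ≠ Z₀ ∧ AreTwins G Z₀.ncard Z₀ Z'} := by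
        intro Z' hZ'
        have hZ'' := Finset.mem_coe.mp hZ'
        have hne := Finset.ne_of_mem_erase hZ''
        have hZ'fib := Finset.mem_of_mem_erase hZ''
        rw [Finset.mem_filter] at hZ'fib
        have hZ'c : IsComponentOf G D Z' := (hCFmem Z').mp hZ'fib.1
        refine ⟨hZ'c, hne, ?_⟩
        exact twins_of_typof_eq hSmem hZ₀ hZ'c (Ne.symm hne) (hZ₀τ.trans hZ'fib.2.symm)
      calc ((CF.filter (fun Z => typof G S Z = τ)).erase Z₀).card
          = (((CF.filter (fun Z => typof G S Z = τ)).erase Z₀ : Finset (Set V)) : Set (Set V)).ncard :=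
            (Set.ncard_coe_finset _).symm
        _ ≤ {Z' : Set V | IsComponentOf G D Z' ∧ Z' ≠ Z₀ ∧ AreTwins G Z₀.ncard Z₀ Z'}.ncard :=
            Set.ncard_le_ncard hsub2 (Set.toFinite _)
        _ ≤ t := htw Z₀ hZ₀
    calc (CF.filter (fun Z => typof G S Z = τ)).card
        = ((CF.filter (fun Z => typof G S Z = τ)).erase Z₀).card + 1 :=
          (Finset.card_erase_add_one hZ₀fib).symm
      _ ≤ t + 1 := by omega
  -- number of trace values
  set P : ℕ := (Df.image (trc G S)).card with hP
  -- number of type values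
  have htyp : (CF.image (typof G S)).card ≤ (P + 1) ^ l := by
    classical
    have hinj : Set.InjOn (fun L : List (Finset V) => (fun i : Fin l => L[i.val]?))
        ↑(CF.image (typof G S)) := by
      intro L₁ hL₁ L₂ hL₂ hfeq
      obtain ⟨Z₁, hZ₁, rfl⟩ := Finset.mem_image.mp (Finset.mem_coe.mp hL₁)
      obtain ⟨Z₂, hZ₂, rfl⟩ := Finset.mem_image.mp (Finset.mem_coe.mp hL₂)
      have hlen₁ : (typof G S Z₁).length ≤ l := by
        rw [typof_length]; exact hcl Z₁ ((hCFmem Z₁).mp hZ₁)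
      have hlen₂ : (typof G S Z₂).length ≤ l := by
        rw [typof_length]; exact hcl Z₂ ((hCFmem Z₂).mp hZ₂)
      apply List.ext_getElem?
      intro n
      by_cases hn : n < l
      · exact congrFun hfeq ⟨n, hn⟩
      · rw [List.getElem?_eq_none (by omega), List.getElem?_eq_none (by omega)]
    calc (CF.image (typof G S)).card
        ≤ (Fintype.piFinset (fun _ : Fin l => Finset.insertNone (Df.image (trc G S)))).card := by
          apply Finset.card_le_card_of_injOn _ _ hinj
          intro L hL
          obtain ⟨Z, hZ, rfl⟩ := Finset.mem_image.mp hL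
          rw [Finset.mem_coe, Fintype.mem_piFinset]
          intro i
          rw [Finset.mem_insertNone]
          intro A hA
          -- A comes from get? = some A
          have hmem : A ∈ typof G S Z := List.mem_of_getElem? hA
          rw [typof, List.mem_map] at hmem
          obtain ⟨v, hv, rfl⟩ := hmem
          apply Finset.mem_image_of_mem
          rw [hDmem]
          exact ((hCFmem Z).mp hZ).1 (mem_sortedOf.mp hv)
      _ = (P + 1) ^ l := by
          rw [Fintype.card_piFinset]
          simp [Finset.card_insertNone, hP]
  -- bound on P via the core lemma
  have hPle : P ≤ l * bnd gam k := by
    -- color classes by index in the component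
    have hidx : ∀ v, v ∈ D → (sortedOf (compOf G D v)).idxOf v < l := by
      intro v hv
      have h1 : v ∈ sortedOf (compOf G D v) := mem_sortedOf.mpr (mem_compOf_self v)
      have h2 := List.idxOf_lt_length_iff.mpr h1
      have h3 : (sortedOf (compOf G D v)).length ≤ l := by
        rw [sortedOf_length]
        exact hcl _ (hvcomp v hv)
      omega
    have hcover : Df.image (trc G S) ⊆ (Finset.range l).biUnion
        (fun j => (Df.filter (fun v => (sortedOf (compOf G D v)).idxOf v = j)).image
          (trc G S)) := by
      intro τ hτ
      obtain ⟨v, hv, rfl⟩ := Finset.mem_image.mp hτ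
      rw [Finset.mem_biUnion]
      refine ⟨(sortedOf (compOf G D v)).idxOf v,
        Finset.mem_range.mpr (hidx v ((hDmem v).mp hv)), ?_⟩
      apply Finset.mem_image_of_mem
      rw [Finset.mem_filter]
      exact ⟨hv, rfl⟩
    have hclass : ∀ j, ((Df.filter (fun v => (sortedOf (compOf G D v)).idxOf v = j)).image
        (trc G S)).card ≤ bnd gam k := by
      intro j
      set Dj := Df.filter (fun v => (sortedOf (compOf G D v)).idxOf v = j) with hDj
      -- independence within the class
      have hindep : ∀ v ∈ Dj, ∀ w ∈ Dj, v ≠ w → ¬ G.Adj v w := by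
        intro v hv w hw hvw hadj
        rw [hDj, Finset.mem_filter] at hv hw
        have hvD : v ∈ D := (hDmem v).mp hv.1
        have hwD : w ∈ D := (hDmem w).mp hw.1
        have hcomp : compOf G D v = compOf G D w :=
          component_eq_of_adj (hvcomp v hvD) (hvcomp w hwD)
            (mem_compOf_self v) (mem_compOf_self w) hadj
        have hvmem : v ∈ sortedOf (compOf G D v) := mem_sortedOf.mpr (mem_compOf_self v)
        have hwmem : w ∈ sortedOf (compOf G D v) := by
          rw [hcomp]; exact mem_sortedOf.mpr (mem_compOf_self w)
        apply hvw
        have heqidx : (sortedOf (compOf G D v)).idxOf v =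
            (sortedOf (compOf G D v)).idxOf w := by
          rw [hv.2]; rw [← hw.2, hcomp]
        exact List.idxOf_inj hvmem |>.mp heqidx
      -- pick representatives per trace value
      have hV : Nonempty V := by
        have h1 : k ≤ Fintype.card V := by omega
        exact Fintype.card_pos_iff.mp (by omega)
      obtain ⟨v₀⟩ := hV
      set rep : Finset V → V := fun τ =>
        if h : ∃ v ∈ Dj, trc G S v = τ then h.choose else v₀ with hrep
      have hrepspec : ∀ τ ∈ Dj.image (trc G S), rep τ ∈ Dj ∧ trc G S (rep τ) = τ := by
        intro τ hτ
        obtain ⟨v, hv, hveq⟩ := Finset.mem_image.mp hτ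
        have h : ∃ v ∈ Dj, trc G S v = τ := ⟨v, hv, hveq⟩
        rw [hrep]
        simp only [dif_pos h]
        exact h.choose_spec
      set Ij := (Dj.image (trc G S)).image rep with hIj
      have hcard : (Dj.image (trc G S)).card = Ij.card := by
        rw [hIj]
        refine (Finset.card_image_of_injOn ?_).symm
        intro τ₁ h₁ τ₂ h₂ heq
        have e₁ := (hrepspec τ₁ (Finset.mem_coe.mp h₁)).2
        have e₂ := (hrepspec τ₂ (Finset.mem_coe.mp h₂)).2
        rw [← e₁, ← e₂, heq]
      rw [hcard]
      -- apply the core lemma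
      apply lemA hσ k S Ij hkcard
      · intro v hv
        obtain ⟨τ, hτ, rfl⟩ := Finset.mem_image.mp hv
        have := (hrepspec τ hτ).1
        rw [hDj, Finset.mem_filter] at this
        intro hc
        exact ((hSmem _).mp hc) ((hDmem _).mp this.1)
      · intro v hv w hw
        obtain ⟨τ₁, hτ₁, rfl⟩ := Finset.mem_image.mp hv
        obtain ⟨τ₂, hτ₂, rfl⟩ := Finset.mem_image.mp hw
        exact hindep _ (hrepspec τ₁ hτ₁).1 _ (hrepspec τ₂ hτ₂).1
      · intro v hv w hw heq
        obtain ⟨τ₁, hτ₁, rfl⟩ := Finset.mem_image.mp (Finset.mem_coe.mp hv)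
        obtain ⟨τ₂, hτ₂, rfl⟩ := Finset.mem_image.mp (Finset.mem_coe.mp hw)
        have e₁ := (hrepspec τ₁ hτ₁).2
        have e₂ := (hrepspec τ₂ hτ₂).2
        rw [heq] at e₁
        rw [e₁] at e₂
        rw [e₂]
    calc P ≤ ((Finset.range l).biUnion (fun j =>
          (Df.filter (fun v => (sortedOf (compOf G D v)).idxOf v = j)).image
            (trc G S))).card := Finset.card_le_card hcover
      _ ≤ ∑ j ∈ Finset.range l, ((Df.filter
            (fun v => (sortedOf (compOf G D v)).idxOf v = j)).image (trc G S)).card :=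
          Finset.card_biUnion_le
      _ ≤ ∑ _j ∈ Finset.range l, bnd gam k := Finset.sum_le_sum (fun j _ => hclass j)
      _ = l * bnd gam k := by rw [Finset.sum_const, Finset.card_range, smul_eq_mul]
  -- numeric assembly
  have hbnd := bnd_le hg hk2
  have hkpow : 1 ≤ k ^ (3 * gam) := Nat.one_le_pow _ _ (by omega)
  have hP1 : P + 1 ≤ 6 * l * k ^ (3 * gam) := by
    have h1 : P ≤ 5 * (l * k ^ (3 * gam)) := by
      calc P ≤ l * (5 * k ^ (3 * gam)) := le_trans hPle (Nat.mul_le_mul_left _ hbnd)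
        _ = 5 * (l * k ^ (3 * gam)) := by ring
    have h2 : 1 ≤ l * k ^ (3 * gam) := by
      have := Nat.mul_le_mul hl hkpow
      simpa using this
    have h3 : 6 * l * k ^ (3 * gam) = 6 * (l * k ^ (3 * gam)) := by ring
    omega
  have hP1l : (P + 1) ^ l ≤ (6 * l) ^ l * k ^ (3 * l * gam) := by
    calc (P + 1) ^ l ≤ (6 * l * k ^ (3 * gam)) ^ l := Nat.pow_le_pow_left hP1 _
      _ = (6 * l) ^ l * (k ^ (3 * gam)) ^ l := by rw [mul_pow]
      _ = (6 * l) ^ l * k ^ (3 * l * gam) := by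
          rw [← pow_mul]
          ring_nf
  calc D.ncard = Df.card := hDcard
    _ ≤ l * CF.card := hDle
    _ ≤ l * ((t + 1) * (CF.image (typof G S)).card) := Nat.mul_le_mul_left _ hpig
    _ ≤ l * ((t + 1) * (P + 1) ^ l) :=
        Nat.mul_le_mul_left _ (Nat.mul_le_mul_left _ htyp)
    _ ≤ l * ((t + 1) * ((6 * l) ^ l * k ^ (3 * l * gam))) :=
        Nat.mul_le_mul_left _ (Nat.mul_le_mul_left _ hP1l)
    _ = (l * (6 * l) ^ l) * (t + 1) * k ^ (3 * l * gam) := by ring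
    _ ≤ (l * (6 * l) ^ l) * (2 * t) * k ^ (3 * l * gam) := by
        apply Nat.mul_le_mul_right
        apply Nat.mul_le_mul_left
        omega
    _ = (2 * l * (6 * l) ^ l) * t * k ^ (3 * l * gam) := by ring
end mainnat



theorem stmt17 (l : ℕ) (hl : 1 ≤ l) : ∃ C C' : ℝ, 0 < C ∧ 0 < C' ∧
    ∀ (V : Type) [Fintype V] (G : SimpleGraph V) (gam : ℕ), 1 ≤ gam →
      WeaklyClosed G gam →
      ∀ D : Set V, (∀ Z : Set V, IsComponentOf G D Z → Z.ncard ≤ l) →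
      ∀ k : ℕ, k = Fintype.card V - D.ncard → 2 ≤ k →
      ∀ t : ℕ, 1 ≤ t →
      (∀ Z : Set V, IsComponentOf G D Z →
        {Z' : Set V | IsComponentOf G D Z' ∧ Z' ≠ Z ∧ AreTwins G Z.ncard Z Z'}.ncard ≤ t) →
      (D.ncard : ℝ) ≤ C * (t : ℝ) * (k : ℝ) ^ (C' * (gam : ℝ)) := by
  refine ⟨((2 * l * (6 * l) ^ l : ℕ) : ℝ), ((3 * l : ℕ) : ℝ), ?_, ?_, ?_⟩
  · have h : 0 < 2 * l * (6 * l) ^ l := by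
      apply Nat.mul_pos
      · omega
      · exact Nat.pow_pos (by omega)
    exact_mod_cast h
  · have h : 0 < 3 * l := by omega
    exact_mod_cast h
  intro V _ G gam hgam hwc D hcl k hk hk2 t ht htw
  obtain ⟨σ, hσ⟩ := hwc
  letI : DecidableEq V := Classical.decEq V
  letI : DecidableRel G.Adj := fun a b => Classical.propDecidable _
  letI : LinearOrder V := LinearOrder.lift' (fun v => ((Fintype.equivFin V) v : ℕ))
    (fun a b h => (Fintype.equivFin V).injective (Fin.val_injective h))
  have hnat := main_nat hgam hl ht hσ D hcl k hk hk2 htw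
  have hexp : ((3 * l : ℕ) : ℝ) * (gam : ℝ) = ((3 * l * gam : ℕ) : ℝ) := by
    push_cast; ring
  rw [hexp, Real.rpow_natCast]
  calc (D.ncard : ℝ) ≤ (((2 * l * (6 * l) ^ l) * t * k ^ (3 * l * gam) : ℕ) : ℝ) := by
        exact_mod_cast hnat
    _ = ((2 * l * (6 * l) ^ l : ℕ) : ℝ) * (t : ℝ) * (k : ℝ) ^ (3 * l * gam) := by
        push_cast; ring
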